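/- arXiv:0911.3441 — 2 statements merged into one kernel-verified Lean document; each statement's English description precedes it below -/
import Mathlib

section
/- Under a multivariate Markov process on a finite rooted tree T with leaf set X, built as a product of k independent two-state Markov processes each of whose transition matrices has non-negative determinant, for any nonempty subset W ⊆ X and any two characters y, z : W → {0,1}^k, the marginal leaf probabilities satisfy p(y)·p(z) ≤ p(y∨z)·p(y∧z), where ∨ and ∧ are taken pointwise and coordinatewise. -/
/-!
Every factor of `multiProb` depends on an assignment `U` only through one coordinate `U ρ j`, or
through the pair `(U u j, U v j)` along an arc. A function on a chain is log-modular, and a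
`2 × 2` matrix with non-negative determinant is log-supermodular on `{0,1}²`, so the joint law is
log-supermodular on the distributive lattice of assignments. Restriction to `W` is a lattice
homomorphism, and the Ahlswede–Daykin four functions theorem shows that log-supermodularity
passes to marginals along lattice homomorphisms.
-/

open scoped Classical

/-- The probability of a full state assignment `U : V → {0,1}^k` under the multivariate
Markov process built from `k` independent two-state Markov processes on a rooted tree. -/
noncomputable def multiProb {V : Type} [Fintype V] (ρ : V) (A : Finset (V × V)) (k : ℕ)
    (π : Fin k → Fin 2 → ℝ) (P : Fin k → V → V → Matrix (Fin 2) (Fin 2) ℝ)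
    (U : V → Fin k → Fin 2) : ℝ :=
  ∏ j, (π j (U ρ j) * ∏ a ∈ A, P j a.1 a.2 (U a.1 j) (U a.2 j))

open Finset

def IsLogSupermodular {α : Type*} [Lattice α] (μ : α → ℝ) : Prop :=
  ∀ a b, μ a * μ b ≤ μ (a ⊓ b) * μ (a ⊔ b)

namespace IsLogSupermodular

variable {α β ι : Type*} [Lattice α] [Lattice β]

theorem of_linearOrder {γ : Type*} [LinearOrder γ] (μ : γ → ℝ) : IsLogSupermodular μ := by
  intro a b
  rcases le_total a b with h | h
  · rw [inf_eq_left.2 h, sup_eq_right.2 h]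
  · rw [inf_eq_right.2 h, sup_eq_left.2 h, mul_comm]

theorem comp {μ : α → ℝ} (hμ : IsLogSupermodular μ) (φ : LatticeHom β α) :
    IsLogSupermodular (μ ∘ φ) := fun a b => by
  simpa only [Function.comp_apply, map_inf, map_sup] using hμ (φ a) (φ b)

theorem mul {μ ν : α → ℝ} (hμ₀ : 0 ≤ μ) (hν₀ : 0 ≤ ν) (hμ : IsLogSupermodular μ)
    (hν : IsLogSupermodular ν) : IsLogSupermodular (μ * ν) := fun a b => by
  simp only [Pi.mul_apply]
  rw [mul_mul_mul_comm, mul_mul_mul_comm (μ (a ⊓ b))]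
  exact mul_le_mul (hμ a b) (hν a b) (mul_nonneg (hν₀ a) (hν₀ b))
    (mul_nonneg (hμ₀ _) (hμ₀ _))

theorem prod (s : Finset ι) {μ : ι → α → ℝ} (hμ₀ : ∀ i ∈ s, 0 ≤ μ i)
    (hμ : ∀ i ∈ s, IsLogSupermodular (μ i)) : IsLogSupermodular (∏ i ∈ s, μ i) := fun a b => by
  simp only [Finset.prod_apply, ← prod_mul_distrib]
  exact prod_le_prod (fun i hi => mul_nonneg (hμ₀ i hi a) (hμ₀ i hi b)) fun i hi => hμ i hi a b

theorem pushforward {α : Type*} [DistribLattice α] [Fintype α] [DecidableEq β] {μ : α → ℝ}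
    (hμ₀ : 0 ≤ μ) (hμ : IsLogSupermodular μ) (φ : LatticeHom α β) :
    IsLogSupermodular fun b => ∑ a, if φ a = b then μ a else 0 := fun b c => by
  have fiber_nonneg (b : β) : 0 ≤ fun a => if φ a = b then μ a else 0 := fun a =>
    ite_nonneg (hμ₀ a) le_rfl
  refine four_functions_theorem_univ _ _ _ _ (fiber_nonneg b) (fiber_nonneg c)
    (fiber_nonneg (b ⊓ c)) (fiber_nonneg (b ⊔ c)) fun a a' => ?_
  rw [ite_zero_mul_ite_zero]
  by_cases hab : φ a = b ∧ φ a' = c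
  · simpa only [hab, map_inf, map_sup, and_self, if_true] using hμ a a'
  · rw [if_neg hab]
    exact mul_nonneg (fiber_nonneg _ _) (fiber_nonneg _ _)

end IsLogSupermodular

/-- Comparable pairs give equality; the only incomparable pair, `(0, 1)` and `(1, 0)`, gives
`M 0 1 * M 1 0 ≤ M 0 0 * M 1 1`, i.e. `0 ≤ M.det`. -/
theorem Matrix.isLogSupermodular_of_det_nonneg (M : Matrix (Fin 2) (Fin 2) ℝ) (hM : 0 ≤ M.det) :
    IsLogSupermodular fun p : Fin 2 × Fin 2 => M p.1 p.2 := by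
  rw [Matrix.det_fin_two] at hM
  rintro ⟨a, b⟩ ⟨a', b'⟩
  fin_cases a <;> fin_cases a' <;> fin_cases b <;> fin_cases b' <;> simp <;> linarith

section multiProb

variable {V : Type} [Fintype V] (ρ : V) (A : Finset (V × V)) (k : ℕ) (π : Fin k → Fin 2 → ℝ)
  (P : Fin k → V → V → Matrix (Fin 2) (Fin 2) ℝ)

theorem multiProb_nonneg (hπ : ∀ j i, 0 ≤ π j i) (hP : ∀ j, ∀ a ∈ A, ∀ i l, 0 ≤ P j a.1 a.2 i l) :
    0 ≤ multiProb ρ A k π P := fun _ =>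
  prod_nonneg fun j _ => mul_nonneg (hπ j _) (prod_nonneg fun a ha => hP j a ha _ _)

theorem isLogSupermodular_multiProb (hπ : ∀ j i, 0 ≤ π j i)
    (hP : ∀ j, ∀ a ∈ A, ∀ i l, 0 ≤ P j a.1 a.2 i l) (hPdet : ∀ j, ∀ a ∈ A, 0 ≤ (P j a.1 a.2).det) :
    IsLogSupermodular (multiProb ρ A k π P) := by
  let root (j : Fin k) : LatticeHom (V → Fin k → Fin 2) (Fin 2) :=
    { toFun := fun U => U ρ j, map_sup' := fun _ _ => rfl, map_inf' := fun _ _ => rfl }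
  let arc (j : Fin k) (a : V × V) : LatticeHom (V → Fin k → Fin 2) (Fin 2 × Fin 2) :=
    { toFun := fun U => (U a.1 j, U a.2 j), map_sup' := fun _ _ => rfl,
      map_inf' := fun _ _ => rfl }
  have hfactor : multiProb ρ A k π P =
      ∏ j, (π j ∘ root j * ∏ a ∈ A, (fun p => P j a.1 a.2 p.1 p.2) ∘ arc j a) := by
    ext U
    simp only [multiProb, Finset.prod_apply, Pi.mul_apply]
    rfl
  have hroot₀ (j : Fin k) : 0 ≤ π j ∘ root j := fun _ => hπ j _
  have harc₀ (j : Fin k) : ∀ a ∈ A, 0 ≤ (fun p : Fin 2 × Fin 2 => P j a.1 a.2 p.1 p.2) ∘ arc j a :=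
    fun a ha _ => hP j a ha _ _
  rw [hfactor]
  refine .prod _ (fun j _ => mul_nonneg (hroot₀ j) (prod_nonneg (harc₀ j))) fun j _ => ?_
  refine .mul (hroot₀ j) (prod_nonneg (harc₀ j)) ((IsLogSupermodular.of_linearOrder _).comp _) ?_
  exact .prod _ (harc₀ j) fun a ha =>
    (Matrix.isLogSupermodular_of_det_nonneg _ (hPdet j a ha)).comp _

end multiProb

theorem stmt_10_general {V : Type} [Fintype V] (ρ : V) (A : Finset (V × V))
    (k : ℕ) (π : Fin k → Fin 2 → ℝ)
    (hπ : ∀ j i, 0 < π j i)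
    (P : Fin k → V → V → Matrix (Fin 2) (Fin 2) ℝ)
    (hP : ∀ j, ∀ a ∈ A, ∀ i l, 0 ≤ P j a.1 a.2 i l)
    (hPdet : ∀ j, ∀ a ∈ A, 0 ≤ (P j a.1 a.2).det)
    (W : Finset V)
    (y z : W → Fin k → Fin 2) :
    (∑ U : V → Fin k → Fin 2, if (∀ v : W, U (v : V) = y v) then multiProb ρ A k π P U else 0) *
      (∑ U : V → Fin k → Fin 2, if (∀ v : W, U (v : V) = z v) then multiProb ρ A k π P U else 0) ≤
    (∑ U : V → Fin k → Fin 2,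
        if (∀ v : W, U (v : V) = fun j => max (y v j) (z v j)) then multiProb ρ A k π P U else 0) *
      (∑ U : V → Fin k → Fin 2,
        if (∀ v : W, U (v : V) = fun j => min (y v j) (z v j)) then multiProb ρ A k π P U else 0) := by
  have hπ₀ (j i) : 0 ≤ π j i := (hπ j i).le
  let restrict : LatticeHom (V → Fin k → Fin 2) (W → Fin k → Fin 2) :=
    { toFun := W.restrict, map_sup' := fun _ _ => rfl, map_inf' := fun _ _ => rfl }
  have hmarginal (u : W → Fin k → Fin 2) :
      (∑ U, if ∀ v : W, U v = u v then multiProb ρ A k π P U else 0) =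
        ∑ U, if restrict U = u then multiProb ρ A k π P U else 0 :=
    sum_congr rfl fun U _ => if_congr funext_iff.symm rfl rfl
  have hlsm := (isLogSupermodular_multiProb ρ A k π P hπ₀ hP hPdet).pushforward
    (multiProb_nonneg ρ A k π P hπ₀ hP) restrict y z
  simp only [← hmarginal] at hlsm
  -- `(y ⊔ z) v` and `(y ⊓ z) v` unfold to the pointwise `max` and `min` of the statement.
  exact hlsm.trans_eq (mul_comm _ _)

/-- Proposition 1: the marginal leaf probabilities of the multivariate Markov process on a
tree are log-supermodular, provided each transition matrix has non-negative determinant. -/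
theorem stmt_10 {V : Type} [Fintype V] (ρ : V) (A : Finset (V × V)) (X : Finset V)
    -- tree structure: arcs directed away from the root, `X` is the leaf set
    (hroot : ∀ a ∈ A, a.2 ≠ ρ)
    (hparent : ∀ v : V, v ≠ ρ → ∃! r : V, (r, v) ∈ A)
    (hleaf : ∀ x ∈ X, ∀ a ∈ A, a.1 ≠ x)
    (k : ℕ) (π : Fin k → Fin 2 → ℝ)
    (hπ : ∀ j i, 0 < π j i) (hπ1 : ∀ j, π j 0 + π j 1 = 1)
    (P : Fin k → V → V → Matrix (Fin 2) (Fin 2) ℝ)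
    (hP : ∀ j, ∀ a ∈ A, ∀ i l, 0 ≤ P j a.1 a.2 i l)
    (hProw : ∀ j, ∀ a ∈ A, ∀ i : Fin 2, P j a.1 a.2 i 0 + P j a.1 a.2 i 1 = 1)
    (hPdet : ∀ j, ∀ a ∈ A, 0 ≤ (P j a.1 a.2).det)
    (W : Finset V) (hWX : W ⊆ X) (hW : W.Nonempty)
    (y z : W → Fin k → Fin 2) :
    (∑ U : V → Fin k → Fin 2, if (∀ v : W, U (v : V) = y v) then multiProb ρ A k π P U else 0) *
      (∑ U : V → Fin k → Fin 2, if (∀ v : W, U (v : V) = z v) then multiProb ρ A k π P U else 0) ≤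
    (∑ U : V → Fin k → Fin 2,
        if (∀ v : W, U (v : V) = fun j => max (y v j) (z v j)) then multiProb ρ A k π P U else 0) *
      (∑ U : V → Fin k → Fin 2,
        if (∀ v : W, U (v : V) = fun j => min (y v j) (z v j)) then multiProb ρ A k π P U else 0) :=
  stmt_10_general ρ A k π hπ P hP hPdet W y z
end

section
/- Let L be a finite distributive lattice, μ a log-supermodular probability measure on L, and for each x in a finite index set C let f_x : L → ℝ≥0 be decreasing. Then ∏_{x∈C} E_μ[f_x] ≤ E_μ[∏_{x∈C} f_x], i.e., the expectation of the product of decreasing non-negative functions is at least the product of their expectations. -/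
/-!
Induction on `C`: a product of non-negative decreasing functions is again non-negative and
decreasing, so the induction step is the two-function FKG inequality for decreasing functions.
That is Mathlib's `fkg` for increasing functions read in the order dual, since
log-supermodularity is symmetric in `⊔` and `⊓`.
-/

open Finset

section FKG

variable {α β ι : Type*} [DistribLattice α] [Fintype α]
  [CommSemiring β] [LinearOrder β] [IsStrictOrderedRing β] [ExistsAddOfLE β]

lemma fkg_antitone {μ f g : α → β} (hμ₀ : 0 ≤ μ) (hf₀ : 0 ≤ f) (hg₀ : 0 ≤ g)
    (hf : Antitone f) (hg : Antitone g) (hμ : ∀ a b, μ a * μ b ≤ μ (a ⊓ b) * μ (a ⊔ b)) :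
    (∑ a, μ a * f a) * ∑ a, μ a * g a ≤ (∑ a, μ a) * ∑ a, μ a * (f a * g a) :=
  fkg (α := αᵒᵈ) f g μ hμ₀ hf₀ hg₀ hf.dual_left hg.dual_left
    fun a b ↦ (hμ a b).trans_eq (mul_comm _ _)

lemma prod_sum_mul_le_sum_mul_prod_of_antitone {μ : α → β} (hμ₀ : 0 ≤ μ) (hμ₁ : ∑ a, μ a = 1)
    (hμ : ∀ a b, μ a * μ b ≤ μ (a ⊓ b) * μ (a ⊔ b)) (s : Finset ι) {f : ι → α → β}
    (hf₀ : ∀ i ∈ s, 0 ≤ f i) (hf : ∀ i ∈ s, Antitone (f i)) :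
    ∏ i ∈ s, ∑ a, μ a * f i a ≤ ∑ a, μ a * ∏ i ∈ s, f i a := by
  classical
  induction s using Finset.induction with
  | empty => simp [hμ₁]
  | insert j s hj ih =>
    simp only [forall_mem_insert] at hf₀ hf
    have hP₀ : 0 ≤ fun a ↦ ∏ i ∈ s, f i a := fun a ↦ prod_nonneg fun i hi ↦ hf₀.2 i hi a
    have hP : Antitone fun a ↦ ∏ i ∈ s, f i a := fun a b hab ↦
      prod_le_prod (fun i hi ↦ hf₀.2 i hi b) fun i hi ↦ hf.2 i hi hab
    simp only [prod_insert hj]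
    calc (∑ a, μ a * f j a) * ∏ i ∈ s, ∑ a, μ a * f i a
        ≤ (∑ a, μ a * f j a) * ∑ a, μ a * ∏ i ∈ s, f i a :=
          mul_le_mul_of_nonneg_left (ih hf₀.2 hf.2)
            (sum_nonneg fun a _ ↦ mul_nonneg (hμ₀ a) (hf₀.1 a))
      _ ≤ ∑ a, μ a * (f j a * ∏ i ∈ s, f i a) := by
          simpa [hμ₁] using fkg_antitone hμ₀ hf₀.1 hP₀ hf.1 hP hμ

end FKG

/-- FKG-type inequality: the `μ`-expectation of a product of non-negative decreasing
functions indexed by a finite set is at least the product of their expectations. -/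
theorem stmt_11 {L ι : Type} [Fintype L] [DistribLattice L]
    (μ : L → ℝ) (hμ0 : ∀ a, 0 ≤ μ a) (hμ1 : ∑ a, μ a = 1)
    (hlog : ∀ a b : L, μ a * μ b ≤ μ (a ⊔ b) * μ (a ⊓ b))
    (C : Finset ι) (f : ι → L → ℝ)
    (hf0 : ∀ x ∈ C, ∀ a, 0 ≤ f x a)
    (hfdec : ∀ x ∈ C, ∀ a b : L, a ≤ b → f x b ≤ f x a) :
    ∏ x ∈ C, (∑ a, μ a * f x a) ≤ ∑ a, μ a * ∏ x ∈ C, f x a :=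
  prod_sum_mul_le_sum_mul_prod_of_antitone hμ0 hμ1
    (fun a b ↦ (hlog a b).trans_eq (mul_comm _ _)) C hf0 fun x hx _ _ ↦ hfdec x hx _ _
end
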